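/- Under the standing hypotheses (G is a finite simple C4-free graph, a, b : V(G) → ℕ satisfy a(x) ≥ 2 and b(x) ≥ 2 for all x, d_G(x) = a(x) + b(x) − 1 for every vertex x, and G has no feasible pair), for any (A, B) ∈ 𝒫 at least one of the following five configurations exists in A: (A1) there are two distinct a-vertices u1, u2 in A both adjacent to a common vertex u ∈ A*; (A2) there are two distinct a-vertices u1, u2 in A and two distinct vertices u, u' ∈ A* with u1 adjacent to u and u2 adjacent to u'; (A3) there are two distinct a-vertices u1, u2 in A and a vertex u ∈ A* with u1 adjacent to u2, u1 adjacent to u, and u2 not adjacent to u; (A4) there are an a-vertex u1 in A, an (a+1)-vertex u2 in A, and a vertex u ∈ A* such that u1, u2, u form a triangle; (A5) there are an a-vertex u1 in A, an (a+1)-vertex u2 in A, and two distinct vertices u, u' ∈ A* with u1 adjacent to u2, u1 adjacent to u, and u2 adjacent to u'. The analogous statement holds in B with the roles of a and b, A* and B* interchanged. -/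
import Mathlib


open Finset
open scoped Classical

variable {V : Type*}

/-- `nbrIn G A x` is the number of neighbors of `x` lying in `A`, i.e. `d_A(x)`. -/
noncomputable def nbrIn (G : SimpleGraph V) (A : Finset V) (x : V) : ℕ :=
  (A.filter fun y => G.Adj x y).card

/-- `G` contains no cycle of length four: there are no four distinct vertices
`w,x,y,z` with `wx, xy, yz, zw` all edges. -/
def C4Free (G : SimpleGraph V) : Prop :=
  ∀ w x y z : V, w ≠ x → w ≠ y → w ≠ z → x ≠ y → x ≠ z → y ≠ z →
    ¬(G.Adj w x ∧ G.Adj x y ∧ G.Adj y z ∧ G.Adj z w)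

/-- `A` is `f`-good: every vertex of `A` has at least `f u` neighbors in `A`. -/
def IsGood (G : SimpleGraph V) (f : V → ℕ) (A : Finset V) : Prop :=
  ∀ u ∈ A, f u ≤ nbrIn G A u

/-- `A` is `g`-degenerate: every non-empty subset `H ⊆ A` has a vertex `u`
with `d_H(u) ≤ g u`. -/
def IsDegenerate (G : SimpleGraph V) (g : V → ℤ) (A : Finset V) : Prop :=
  ∀ H ⊆ A, H.Nonempty → ∃ u ∈ H, (nbrIn G H u : ℤ) ≤ g u

/-- `(A,B)` is a partition of the vertex set: disjoint, non-empty, covering. -/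
def IsPartition [Fintype V] (A B : Finset V) : Prop :=
  Disjoint A B ∧ A.Nonempty ∧ B.Nonempty ∧ A ∪ B = Finset.univ

/-- `(A,B)` is a feasible pair: disjoint non-empty sets with `A` being `a`-good
and `B` being `b`-good. -/
def FeasiblePair (G : SimpleGraph V) (a b : V → ℕ) (A B : Finset V) : Prop :=
  Disjoint A B ∧ A.Nonempty ∧ B.Nonempty ∧ IsGood G a A ∧ IsGood G b B

/-- `(A,B)` is an `(a,b)`-partition: a partition with `A` being `(a-1)`-degenerate
and `B` being `(b-1)`-degenerate. -/
def ABPartition [Fintype V] (G : SimpleGraph V) (a b : V → ℕ) (A B : Finset V) : Prop :=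
  IsPartition A B ∧ IsDegenerate G (fun x => (a x : ℤ) - 1) A ∧
    IsDegenerate G (fun x => (b x : ℤ) - 1) B

/-- The number of edges of the subgraph of `G` induced on `A`. -/
noncomputable def edgesIn (G : SimpleGraph V) (A : Finset V) : ℕ :=
  ((A ×ˢ A).filter fun p => G.Adj p.1 p.2).card / 2

/-- The weight `w(A,B) = |E(G[A])| + |E(G[B])| + Σ_{x∈A} b(x) + Σ_{x∈B} a(x)`. -/
noncomputable def weight (G : SimpleGraph V) (a b : V → ℕ) (A B : Finset V) : ℕ :=
  edgesIn G A + edgesIn G B + ∑ x ∈ A, b x + ∑ x ∈ B, a x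

/-- `(A,B)` belongs to `𝒫`: it is an `(a,b)`-partition of maximum weight among
all `(a,b)`-partitions. -/
def MaxAB [Fintype V] (G : SimpleGraph V) (a b : V → ℕ) (A B : Finset V) : Prop :=
  ABPartition G a b A B ∧
    ∀ A' B' : Finset V, ABPartition G a b A' B' → weight G a b A' B' ≤ weight G a b A B

/-- `starSet G f A` is `A* = {x ∈ A : d_A(x) ≤ f(x) - 1}`. -/
noncomputable def starSet (G : SimpleGraph V) (f : V → ℕ) (A : Finset V) : Finset V :=
  A.filter fun x => nbrIn G A x < f x
/-- `HasConfig G f A S` says that one of the five configurations (A1)-(A5) of Claim 9 occurs,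
where `A` plays the role of the part, `f` the role of the function `a`, and `S` the role of
`A*`. Here an `f`-vertex in `A` is `x ∈ A` with `d_A(x) = f(x)`, and an `(f+1)`-vertex in `A`
is `x ∈ A` with `d_A(x) = f(x) + 1`. -/
def HasConfig (G : SimpleGraph V) (f : V → ℕ) (A S : Finset V) : Prop :=
  -- (A1): two f-vertices u1 ≠ u2 in A adjacent to the same vertex u ∈ S
  (∃ u1 u2 u : V, u1 ≠ u2 ∧
    u1 ∈ A ∧ nbrIn G A u1 = f u1 ∧ u2 ∈ A ∧ nbrIn G A u2 = f u2 ∧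
    u ∈ S ∧ G.Adj u1 u ∧ G.Adj u2 u) ∨
  -- (A2): two f-vertices u1 ≠ u2 in A adjacent to distinct u, u' ∈ S respectively
  (∃ u1 u2 u u' : V, u1 ≠ u2 ∧ u ≠ u' ∧
    u1 ∈ A ∧ nbrIn G A u1 = f u1 ∧ u2 ∈ A ∧ nbrIn G A u2 = f u2 ∧
    u ∈ S ∧ u' ∈ S ∧ G.Adj u1 u ∧ G.Adj u2 u') ∨
  -- (A3): f-vertices u1 ≠ u2 in A and u ∈ S with u1 ~ u2, u1 ~ u, u2 ≁ u
  (∃ u1 u2 u : V, u1 ≠ u2 ∧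
    u1 ∈ A ∧ nbrIn G A u1 = f u1 ∧ u2 ∈ A ∧ nbrIn G A u2 = f u2 ∧
    u ∈ S ∧ G.Adj u1 u2 ∧ G.Adj u1 u ∧ ¬ G.Adj u2 u) ∨
  -- (A4): an f-vertex u1, an (f+1)-vertex u2 in A and u ∈ S forming a triangle
  (∃ u1 u2 u : V,
    u1 ∈ A ∧ nbrIn G A u1 = f u1 ∧ u2 ∈ A ∧ nbrIn G A u2 = f u2 + 1 ∧
    u ∈ S ∧ G.Adj u1 u2 ∧ G.Adj u1 u ∧ G.Adj u2 u) ∨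
  -- (A5): an f-vertex u1, an (f+1)-vertex u2 in A and distinct u, u' ∈ S with
  -- u1 ~ u2, u1 ~ u, u2 ~ u'
  (∃ u1 u2 u u' : V, u ≠ u' ∧
    u1 ∈ A ∧ nbrIn G A u1 = f u1 ∧ u2 ∈ A ∧ nbrIn G A u2 = f u2 + 1 ∧
    u ∈ S ∧ u' ∈ S ∧ G.Adj u1 u2 ∧ G.Adj u1 u ∧ G.Adj u2 u')

section Helpers

lemma nbrIn_mono (G : SimpleGraph V) {C D : Finset V} (h : C ⊆ D) (x : V) :
    nbrIn G C x ≤ nbrIn G D x :=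
  Finset.card_le_card (Finset.filter_subset_filter _ h)

lemma nbrIn_le_card_erase (G : SimpleGraph V) (C : Finset V) (x : V) :
    nbrIn G C x ≤ (C.erase x).card := by
  apply Finset.card_le_card
  intro z hz
  rw [Finset.mem_filter] at hz
  exact Finset.mem_erase.mpr ⟨(G.ne_of_adj hz.2).symm, hz.1⟩

lemma nbrIn_insert (G : SimpleGraph V) {C : Finset V} {z : V} (hz : z ∉ C) (x : V) :
    nbrIn G (insert z C) x = nbrIn G C x + if G.Adj x z then 1 else 0 := by
  unfold nbrIn
  rw [Finset.filter_insert]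
  split_ifs with h
  · rw [Finset.card_insert_of_notMem (fun hc => hz (Finset.mem_of_mem_filter _ hc))]
  · rfl

lemma nbrIn_erase_mem (G : SimpleGraph V) {C : Finset V} {z : V} (hz : z ∈ C) (x : V) :
    nbrIn G C x = nbrIn G (C.erase z) x + if G.Adj x z then 1 else 0 := by
  conv_lhs => rw [← Finset.insert_erase hz]
  exact nbrIn_insert G (Finset.notMem_erase _ _) x

lemma nbrIn_erase_self (G : SimpleGraph V) (C : Finset V) (x : V) :
    nbrIn G (C.erase x) x = nbrIn G C x := by
  by_cases hx : x ∈ C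
  · have h := nbrIn_erase_mem G hx x
    simp only [G.irrefl, if_false] at h
    omega
  · rw [Finset.erase_eq_of_notMem hx]

lemma nbrIn_insert_self (G : SimpleGraph V) (C : Finset V) (x : V) :
    nbrIn G (insert x C) x = nbrIn G C x := by
  by_cases hx : x ∈ C
  · rw [Finset.insert_eq_self.mpr hx]
  · rw [nbrIn_insert G hx x]
    simp [G.irrefl]

lemma nbrIn_union (G : SimpleGraph V) {C D : Finset V} (h : Disjoint C D) (x : V) :
    nbrIn G (C ∪ D) x = nbrIn G C x + nbrIn G D x := by
  unfold nbrIn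
  rw [Finset.filter_union, Finset.card_union_of_disjoint (Finset.disjoint_filter_filter h)]

lemma nbrIn_univ [Fintype V] (G : SimpleGraph V) (x : V) :
    nbrIn G Finset.univ x = G.degree x := by
  unfold nbrIn
  rw [← SimpleGraph.card_neighborFinset_eq_degree]
  congr 1
  ext z
  simp [SimpleGraph.mem_neighborFinset]

lemma nbrIn_split [Fintype V] (G : SimpleGraph V) {C D : Finset V} (hdisj : Disjoint C D)
    (huniv : C ∪ D = Finset.univ) (x : V) :
    nbrIn G C x + nbrIn G D x = G.degree x := by
  rw [← nbrIn_union G hdisj, huniv, nbrIn_univ]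

lemma double_count (G : SimpleGraph V) (C : Finset V) :
    ((C ×ˢ C).filter fun p => G.Adj p.1 p.2).card = ∑ z ∈ C, nbrIn G C z := by
  rw [Finset.card_filter, Finset.sum_product]
  exact Finset.sum_congr rfl fun x _ => (Finset.card_filter _ _).symm

lemma edgesIn_eq (G : SimpleGraph V) (C : Finset V) :
    edgesIn G C = (∑ z ∈ C, nbrIn G C z) / 2 := by
  unfold edgesIn
  rw [double_count]

lemma edgesIn_erase (G : SimpleGraph V) {C : Finset V} {x : V} (hx : x ∈ C) :
    edgesIn G C = edgesIn G (C.erase x) + nbrIn G (C.erase x) x := by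
  have key : ∑ z ∈ C, nbrIn G C z
      = ∑ z ∈ C.erase x, nbrIn G (C.erase x) z + 2 * nbrIn G (C.erase x) x := by
    rw [← Finset.sum_erase_add _ _ hx]
    have h1 : ∀ z ∈ C.erase x, nbrIn G C z
        = nbrIn G (C.erase x) z + if G.Adj z x then 1 else 0 :=
      fun z _ => nbrIn_erase_mem G hx z
    rw [Finset.sum_congr rfl h1, Finset.sum_add_distrib]
    have h2 : ∑ z ∈ C.erase x, (if G.Adj z x then 1 else 0) = nbrIn G (C.erase x) x := by
      rw [nbrIn, Finset.card_filter]
      exact Finset.sum_congr rfl fun z _ => by rw [G.adj_comm]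
    have h3 : nbrIn G C x = nbrIn G (C.erase x) x := (nbrIn_erase_self G C x).symm
    rw [h2, h3]
    omega
  rw [edgesIn_eq, edgesIn_eq, key]
  omega

lemma weight_comm (G : SimpleGraph V) (a b : V → ℕ) (A B : Finset V) :
    weight G a b A B = weight G b a B A := by
  unfold weight
  omega

lemma moveIdent (G : SimpleGraph V) (a b : V → ℕ) {A B : Finset V} {x : V}
    (hxA : x ∈ A) (hxB : x ∉ B) :
    weight G a b (A.erase x) (insert x B) + nbrIn G (A.erase x) x + b x
      = weight G a b A B + nbrIn G B x + a x := by
  have e1 : edgesIn G A = edgesIn G (A.erase x) + nbrIn G (A.erase x) x := edgesIn_erase G hxA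
  have e2 : edgesIn G (insert x B) = edgesIn G B + nbrIn G B x := by
    have h := edgesIn_erase G (Finset.mem_insert_self x B)
    rwa [Finset.erase_insert hxB] at h
  have s1 : ∑ z ∈ A.erase x, b z + b x = ∑ z ∈ A, b z := Finset.sum_erase_add _ _ hxA
  have s2 : ∑ z ∈ insert x B, a z = a x + ∑ z ∈ B, a z := Finset.sum_insert hxB
  unfold weight
  omega

lemma exists_good_of_not_degenerate {G : SimpleGraph V} {c : V → ℕ} {C : Finset V}
    (h : ¬ IsDegenerate G (fun x => (c x : ℤ) - 1) C) :
    ∃ H, H ⊆ C ∧ H.Nonempty ∧ IsGood G c H := by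
  unfold IsDegenerate at h
  push_neg at h
  obtain ⟨H, hHC, hne, hH⟩ := h
  exact ⟨H, hHC, hne, fun u hu => by have := hH u hu; omega⟩

lemma common_nbr_unique {G : SimpleGraph V} (hC4 : C4Free G) {s t m n : V}
    (h1 : G.Adj s m) (h2 : G.Adj t m) (h3 : G.Adj s n) (h4 : G.Adj t n)
    (hst : s ≠ t) : m = n := by
  by_contra hmn
  exact hC4 s m t n h1.ne hst h3.ne h2.ne.symm hmn h4.ne ⟨h1, h2.symm, h4, h3.symm⟩

lemma mem_starSet {G : SimpleGraph V} {f : V → ℕ} {A : Finset V} {x : V} :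
    x ∈ starSet G f A ↔ x ∈ A ∧ nbrIn G A x < f x := by
  unfold starSet
  exact Finset.mem_filter

lemma isPartition_comm [Fintype V] {A B : Finset V} (h : IsPartition A B) : IsPartition B A :=
  ⟨h.1.symm, h.2.2.1, h.2.1, by rw [Finset.union_comm]; exact h.2.2.2⟩

lemma abPartition_comm [Fintype V] {G : SimpleGraph V} {a b : V → ℕ} {A B : Finset V}
    (h : ABPartition G a b A B) : ABPartition G b a B A :=
  ⟨isPartition_comm h.1, h.2.2, h.2.1⟩

lemma maxAB_comm [Fintype V] {G : SimpleGraph V} {a b : V → ℕ} {A B : Finset V}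
    (h : MaxAB G a b A B) : MaxAB G b a B A := by
  refine ⟨abPartition_comm h.1, fun B' A' h' => ?_⟩
  rw [show weight G b a B' A' = weight G a b A' B' from (weight_comm G a b A' B').symm,
    show weight G b a B A = weight G a b A B from (weight_comm G a b A B).symm]
  exact h.2 A' B' (abPartition_comm h')

lemma moveA_good [Fintype V] {G : SimpleGraph V} {a b : V → ℕ} {A B : Finset V}
    (hAB : MaxAB G a b A B) (hdeg : ∀ x : V, G.degree x + 1 = a x + b x)
    {u : V} (huA : u ∈ A) (hustar : nbrIn G A u < a u) (hA2 : (A.erase u).Nonempty) :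
    ∃ H, H ⊆ insert u B ∧ H.Nonempty ∧ IsGood G b H := by
  obtain ⟨⟨⟨hdisj, hAne, hBne, huniv⟩, hdegA, hdegB⟩, hmax⟩ := hAB
  have huB : u ∉ B := Finset.disjoint_left.mp hdisj huA
  have hident := moveIdent G a b huA huB
  have hself : nbrIn G (A.erase u) u = nbrIn G A u := nbrIn_erase_self G A u
  have hsplit : nbrIn G A u + nbrIn G B u = G.degree u := nbrIn_split G hdisj huniv u
  have hdegu := hdeg u
  have hlt : weight G a b A B < weight G a b (A.erase u) (insert u B) := by omega
  have hpart : IsPartition (A.erase u) (insert u B) := by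
    refine ⟨?_, hA2, ⟨u, Finset.mem_insert_self u B⟩, ?_⟩
    · rw [Finset.disjoint_left]
      intro z hz1 hz2
      obtain ⟨hzu, hzA⟩ := Finset.mem_erase.mp hz1
      rcases Finset.mem_insert.mp hz2 with rfl | hzB
      · exact hzu rfl
      · exact Finset.disjoint_left.mp hdisj hzA hzB
    · rw [Finset.union_insert, ← Finset.insert_union, Finset.insert_erase huA, huniv]
  have hnd : ¬ IsDegenerate G (fun x => (b x : ℤ) - 1) (insert u B) := by
    intro hdegB'
    have hABP : ABPartition G a b (A.erase u) (insert u B) :=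
      ⟨hpart, fun H hH hne => hdegA H (hH.trans (Finset.erase_subset _ _)) hne, hdegB'⟩
    exact absurd (hmax _ _ hABP) (by omega)
  exact exists_good_of_not_degenerate hnd

end Helpers

lemma side_config [Fintype V] (G : SimpleGraph V) (a b : V → ℕ)
    (hC4 : C4Free G) (ha : ∀ x : V, 2 ≤ a x) (hb : ∀ x : V, 2 ≤ b x)
    (hdeg : ∀ x : V, G.degree x + 1 = a x + b x)
    (hnf : ¬ ∃ A B : Finset V, FeasiblePair G a b A B)
    (A B : Finset V) (hAB : MaxAB G a b A B) :
    HasConfig G a A (starSet G a A) := by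
  have hAB' := hAB
  obtain ⟨⟨⟨hdisj, hAne, hBne, huniv⟩, hdegA, hdegB⟩, hmax⟩ := hAB'
  have hdeg' : ∀ x : V, G.degree x + 1 = b x + a x := fun x => by have := hdeg x; omega
  have hBA : MaxAB G b a B A := maxAB_comm hAB
  have hAstar_ne : (starSet G a A).Nonempty := by
    obtain ⟨u, hu, hdu⟩ := hdegA A Finset.Subset.rfl hAne
    have hdu' : (nbrIn G A u : ℤ) ≤ (a u : ℤ) - 1 := hdu
    exact ⟨u, mem_starSet.mpr ⟨hu, by omega⟩⟩
  have hBstar_ne : (starSet G b B).Nonempty := by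
    obtain ⟨u, hu, hdu⟩ := hdegB B Finset.Subset.rfl hBne
    have hdu' : (nbrIn G B u : ℤ) ≤ (b u : ℤ) - 1 := hdu
    exact ⟨u, mem_starSet.mpr ⟨hu, by omega⟩⟩
  have small_refute : ∀ (c : V → ℕ) (H : Finset V) (p q : V), (∀ x, 2 ≤ c x) →
      H ⊆ insert p {q} → H.Nonempty → IsGood G c H → False := by
    intro c H p q hc hsub hne hgood
    obtain ⟨z, hz⟩ := hne
    have h1 : H.card ≤ 2 := by
      have h0 : (insert p ({q} : Finset V)).card ≤ 2 := by
        have := Finset.card_insert_le p ({q} : Finset V)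
        simpa using this
      exact (Finset.card_le_card hsub).trans h0
    have h2 : nbrIn G H z ≤ (H.erase z).card := nbrIn_le_card_erase G H z
    have h3 : (H.erase z).card = H.card - 1 := Finset.card_erase_of_mem hz
    have h4 := hgood z hz
    have h5 := hc z
    omega
  have hA2 : 2 ≤ A.card := by
    by_contra hcon
    have hA1 : A.card = 1 := by
      have := Finset.card_pos.mpr hAne
      omega
    obtain ⟨u0, hu0⟩ := Finset.card_eq_one.mp hA1
    obtain ⟨y, hy⟩ := hBstar_ne
    obtain ⟨hyB, hyd⟩ := mem_starSet.mp hy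
    by_cases hBe : (B.erase y).Nonempty
    · obtain ⟨S, hSsub, hSne, hSgood⟩ := moveA_good hBA hdeg' hyB hyd hBe
      rw [hu0] at hSsub
      exact small_refute a S y u0 ha hSsub hSne hSgood
    · have hBy : B = {y} := by
        apply Finset.eq_singleton_iff_unique_mem.mpr
        refine ⟨hyB, fun z hz => ?_⟩
        by_contra hzy
        exact hBe ⟨z, Finset.mem_erase.mpr ⟨hzy, hz⟩⟩
      have hdegu : G.degree u0 ≤ 1 := by
        have hu0m : u0 ∈ A ∪ B := by
          rw [huniv]; exact Finset.mem_univ u0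
        have h1 : nbrIn G (A ∪ B) u0 = G.degree u0 := by
          rw [huniv, nbrIn_univ]
        have h2 : nbrIn G (A ∪ B) u0 ≤ ((A ∪ B).erase u0).card := nbrIn_le_card_erase G _ u0
        have h5 : ((A ∪ B).erase u0).card = (A ∪ B).card - 1 := Finset.card_erase_of_mem hu0m
        have h4 : (A ∪ B).card ≤ 2 := by
          have h6 := Finset.card_union_le A B
          have h7 : B.card = 1 := by rw [hBy]; simp
          omega
        omega
      have := hdeg u0; have := ha u0; have := hb u0
      omega
  have hB2 : 2 ≤ B.card := by
    by_contra hcon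
    have hB1 : B.card = 1 := by
      have := Finset.card_pos.mpr hBne
      omega
    obtain ⟨y0, hy0⟩ := Finset.card_eq_one.mp hB1
    obtain ⟨u, hu⟩ := hAstar_ne
    obtain ⟨huA, hud⟩ := mem_starSet.mp hu
    have hAe : (A.erase u).Nonempty := by
      rw [← Finset.card_pos, Finset.card_erase_of_mem huA]
      omega
    obtain ⟨H, hHsub, hHne, hHgood⟩ := moveA_good hAB hdeg huA hud hAe
    rw [hy0] at hHsub
    exact small_refute b H u y0 hb hHsub hHne hHgood
  have SA : ∀ u ∈ starSet G a A, ∃ H, H ⊆ insert u B ∧ H.Nonempty ∧ IsGood G b H := by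
    intro u hu
    obtain ⟨huA, hud⟩ := mem_starSet.mp hu
    have hAe : (A.erase u).Nonempty := by
      rw [← Finset.card_pos, Finset.card_erase_of_mem huA]; omega
    exact moveA_good hAB hdeg huA hud hAe
  have SB : ∀ y ∈ starSet G b B, ∃ S, S ⊆ insert y A ∧ S.Nonempty ∧ IsGood G a S := by
    intro y hy
    obtain ⟨hyB, hyd⟩ := mem_starSet.mp hy
    have hBe : (B.erase y).Nonempty := by
      rw [← Finset.card_pos, Finset.card_erase_of_mem hyB]; omega
    exact moveA_good hBA hdeg' hyB hyd hBe
  have hadj : ∀ u ∈ starSet G a A, ∀ y ∈ starSet G b B, G.Adj u y := by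
    intro u hu y hy
    obtain ⟨huA, hud⟩ := mem_starSet.mp hu
    obtain ⟨hyB, hyd⟩ := mem_starSet.mp hy
    have huB : u ∉ B := Finset.disjoint_left.mp hdisj huA
    have hyA : y ∉ A := fun h => Finset.disjoint_left.mp hdisj h hyB
    obtain ⟨H, hHsub, hHne, hHgood⟩ := SA u hu
    obtain ⟨S, hSsub, hSne, hSgood⟩ := SB y hy
    by_contra hnadj
    apply hnf
    refine ⟨S, H, ?_, hSne, hHne, hSgood, hHgood⟩
    rw [Finset.disjoint_left]
    intro z hzS hzH
    have hz1 : z = y ∨ z ∈ A := by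
      rcases Finset.mem_insert.mp (hSsub hzS) with h | h
      · exact Or.inl h
      · exact Or.inr h
    have hz2 : z = u ∨ z ∈ B := by
      rcases Finset.mem_insert.mp (hHsub hzH) with h | h
      · exact Or.inl h
      · exact Or.inr h
    rcases hz1 with rfl | hzA
    · -- z = y, y ∈ H
      have h1 := hHgood z hzH
      have h2 : nbrIn G H z ≤ nbrIn G (insert u B) z := nbrIn_mono G hHsub z
      have h3 : nbrIn G (insert u B) z = nbrIn G B z + if G.Adj z u then 1 else 0 :=
        nbrIn_insert G huB z
      have h4 : G.Adj z u := by
        by_contra hzu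
        rw [if_neg hzu] at h3
        omega
      exact hnadj h4.symm
    · rcases hz2 with rfl | hzB
      · -- z = u ∈ S
        have h1 := hSgood z hzS
        have h2 : nbrIn G S z ≤ nbrIn G (insert y A) z := nbrIn_mono G hSsub z
        have h3 : nbrIn G (insert y A) z = nbrIn G A z + if G.Adj z y then 1 else 0 :=
          nbrIn_insert G hyA z
        have h4 : G.Adj z y := by
          by_contra hzy
          rw [if_neg hzy] at h3
          omega
        exact hnadj h4
      · exact Finset.disjoint_left.mp hdisj hzA hzB
  by_cases hX : ∃ v ∈ A, a v ≤ nbrIn G A v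
  · -- main case: some vertex of A has d_A ≥ a
    obtain ⟨v, hvA, hva0⟩ := hX
    set X := A.filter (fun v => ¬ nbrIn G A v < a v) with hXdef
    have hXne : X.Nonempty := ⟨v, Finset.mem_filter.mpr ⟨hvA, not_lt.mpr hva0⟩⟩
    have hXsub : X ⊆ A := Finset.filter_subset _ _
    have hstar_eq : starSet G a A = A.filter (fun x => nbrIn G A x < a x) := rfl
    have hsplitA : ∀ x : V, nbrIn G (starSet G a A) x + nbrIn G X x = nbrIn G A x := by
      intro x
      rw [hstar_eq, hXdef, ← nbrIn_union G (Finset.disjoint_filter_filter_not A A _),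
        Finset.filter_union_filter_not_eq _ A]
    by_cases hcard1 : (starSet G a A).card = 1
    · -- |A*| = 1
      obtain ⟨u, hu⟩ := Finset.card_eq_one.mp hcard1
      have huS : u ∈ starSet G a A := by
        rw [hu]; exact Finset.mem_singleton_self u
      obtain ⟨huA, hud⟩ := mem_starSet.mp huS
      have hnotstar : ∀ w ∈ A, w ≠ u → a w ≤ nbrIn G A w := by
        intro w hw hwu
        by_contra h
        have hmem : w ∈ starSet G a A := mem_starSet.mpr ⟨hw, by omega⟩
        rw [hu, Finset.mem_singleton] at hmem
        exact hwu hmem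
      have hAune : (A.erase u).Nonempty := by
        rw [← Finset.card_pos, Finset.card_erase_of_mem huA]; omega
      obtain ⟨v1, hv1m, hv1d⟩ := hdegA (A.erase u) (Finset.erase_subset _ _) hAune
      have hv1d' : (nbrIn G (A.erase u) v1 : ℤ) ≤ (a v1 : ℤ) - 1 := hv1d
      obtain ⟨hv1u, hv1A⟩ := Finset.mem_erase.mp hv1m
      have hv1a : a v1 ≤ nbrIn G A v1 := hnotstar v1 hv1A hv1u
      have hrel1 : nbrIn G A v1 = nbrIn G (A.erase u) v1 + if G.Adj v1 u then 1 else 0 :=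
        nbrIn_erase_mem G huA v1
      have hv1adj : G.Adj v1 u := by
        by_contra h
        rw [if_neg h] at hrel1
        omega
      have hdv1 : nbrIn G A v1 = a v1 := by
        rw [if_pos hv1adj] at hrel1
        omega
      have hYne : ((A.erase u).erase v1).Nonempty := by
        by_contra h
        rw [Finset.not_nonempty_iff_eq_empty] at h
        have h2 : nbrIn G (A.erase u) v1 ≤ ((A.erase u).erase v1).card := nbrIn_le_card_erase G _ v1
        rw [h] at h2
        simp at h2
        have := ha v1
        rw [if_pos hv1adj] at hrel1
        omega
      obtain ⟨w, hwm, hwd⟩ := hdegA ((A.erase u).erase v1)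
        ((Finset.erase_subset _ _).trans (Finset.erase_subset _ _)) hYne
      have hwd' : (nbrIn G ((A.erase u).erase v1) w : ℤ) ≤ (a w : ℤ) - 1 := hwd
      obtain ⟨hwv1, hwm2⟩ := Finset.mem_erase.mp hwm
      obtain ⟨hwu, hwA⟩ := Finset.mem_erase.mp hwm2
      have hwa : a w ≤ nbrIn G A w := hnotstar w hwA hwu
      have hrelw1 : nbrIn G (A.erase u) w
          = nbrIn G ((A.erase u).erase v1) w + if G.Adj w v1 then 1 else 0 :=
        nbrIn_erase_mem G (Finset.mem_erase.mpr ⟨hv1u, hv1A⟩) w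
      have hrelw2 : nbrIn G A w = nbrIn G (A.erase u) w + if G.Adj w u then 1 else 0 :=
        nbrIn_erase_mem G huA w
      by_cases hwu' : G.Adj w u <;> by_cases hwv' : G.Adj w v1
      · rw [if_pos hwu'] at hrelw2
        rw [if_pos hwv'] at hrelw1
        have hcases : nbrIn G A w = a w ∨ nbrIn G A w = a w + 1 := by omega
        rcases hcases with h | h
        · exact Or.inl ⟨v1, w, u, Ne.symm hwv1, hv1A, hdv1, hwA, h, huS, hv1adj, hwu'⟩
        · exact Or.inr (Or.inr (Or.inr (Or.inl
            ⟨v1, w, u, hv1A, hdv1, hwA, h, huS, hwv'.symm, hv1adj, hwu'⟩)))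
      · rw [if_pos hwu'] at hrelw2
        rw [if_neg hwv'] at hrelw1
        have h : nbrIn G A w = a w := by omega
        exact Or.inl ⟨v1, w, u, Ne.symm hwv1, hv1A, hdv1, hwA, h, huS, hv1adj, hwu'⟩
      · rw [if_neg hwu'] at hrelw2
        rw [if_pos hwv'] at hrelw1
        have h : nbrIn G A w = a w := by omega
        exact Or.inr (Or.inr (Or.inl
          ⟨v1, w, u, Ne.symm hwv1, hv1A, hdv1, hwA, h, huS, hwv'.symm, hv1adj, hwu'⟩))
      · rw [if_neg hwu'] at hrelw2
        rw [if_neg hwv'] at hrelw1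
        omega
    · -- |A*| ≥ 2
      have h2star : 2 ≤ (starSet G a A).card := by
        have := Finset.card_pos.mpr hAstar_ne
        omega
      obtain ⟨y, hy⟩ := hBstar_ne
      obtain ⟨hyB, hyd⟩ := mem_starSet.mp hy
      have hyA : y ∉ A := fun h => Finset.disjoint_left.mp hdisj h hyB
      have hstaradjy : ∀ u ∈ starSet G a A, G.Adj u y := fun u hu => hadj u hu y hy
      have hcap : ∀ x ∈ A, nbrIn G (starSet G a A) x ≤ 1 := by
        intro x hx
        by_contra h
        have h1 : 1 < ((starSet G a A).filter (fun z => G.Adj x z)).card := by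
          unfold nbrIn at h
          omega
        obtain ⟨p, hp, q, hq, hpq⟩ := Finset.one_lt_card.mp h1
        obtain ⟨hpS, hxp⟩ := Finset.mem_filter.mp hp
        obtain ⟨hqS, hxq⟩ := Finset.mem_filter.mp hq
        have heq : x = y := common_nbr_unique hC4 hxp.symm hxq.symm
          (hstaradjy p hpS) (hstaradjy q hqS) hpq
        exact hyA (heq ▸ hx)
      obtain ⟨v1, hv1X, hv1d⟩ := hdegA X hXsub hXne
      have hv1d' : (nbrIn G X v1 : ℤ) ≤ (a v1 : ℤ) - 1 := hv1d
      obtain ⟨hv1A, hv1a'⟩ := Finset.mem_filter.mp hv1X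
      have hv1a : a v1 ≤ nbrIn G A v1 := not_lt.mp hv1a'
      have hsp1 := hsplitA v1
      have hcap1 := hcap v1 hv1A
      have hstar1 : nbrIn G (starSet G a A) v1 = 1 := by omega
      have hdv1 : nbrIn G A v1 = a v1 := by omega
      have hu_ex : ((starSet G a A).filter (fun z => G.Adj v1 z)).Nonempty := by
        rw [← Finset.card_pos]
        unfold nbrIn at hstar1
        omega
      obtain ⟨u, hu'⟩ := hu_ex
      obtain ⟨huS, hv1u⟩ := Finset.mem_filter.mp hu'
      have hXe : (X.erase v1).Nonempty := by
        by_contra h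
        rw [Finset.not_nonempty_iff_eq_empty] at h
        have h2 : nbrIn G X v1 ≤ (X.erase v1).card := nbrIn_le_card_erase G _ v1
        rw [h] at h2
        simp at h2
        have := ha v1
        omega
      obtain ⟨v2, hv2m, hv2d⟩ := hdegA (X.erase v1) ((Finset.erase_subset _ _).trans hXsub) hXe
      have hv2d' : (nbrIn G (X.erase v1) v2 : ℤ) ≤ (a v2 : ℤ) - 1 := hv2d
      obtain ⟨hv21, hv2X⟩ := Finset.mem_erase.mp hv2m
      obtain ⟨hv2A, hv2a'⟩ := Finset.mem_filter.mp hv2X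
      have hv2a : a v2 ≤ nbrIn G A v2 := not_lt.mp hv2a'
      have hrel2 : nbrIn G X v2 = nbrIn G (X.erase v1) v2 + if G.Adj v2 v1 then 1 else 0 :=
        nbrIn_erase_mem G hv1X v2
      have hsp2 := hsplitA v2
      have hcap2 := hcap v2 hv2A
      by_cases h21 : G.Adj v2 v1
      · rw [if_pos h21] at hrel2
        by_cases hstar20 : nbrIn G (starSet G a A) v2 = 0
        · have hdv2 : nbrIn G A v2 = a v2 := by omega
          have hnadj : ¬ G.Adj v2 u := by
            intro hadj2
            have hmem : u ∈ (starSet G a A).filter (fun z => G.Adj v2 z) :=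
              Finset.mem_filter.mpr ⟨huS, hadj2⟩
            have h0 : 0 < ((starSet G a A).filter (fun z => G.Adj v2 z)).card :=
              Finset.card_pos.mpr ⟨u, hmem⟩
            unfold nbrIn at hstar20
            omega
          exact Or.inr (Or.inr (Or.inl
            ⟨v1, v2, u, Ne.symm hv21, hv1A, hdv1, hv2A, hdv2, huS, h21.symm, hv1u, hnadj⟩))
        · have hstar21 : nbrIn G (starSet G a A) v2 = 1 := by omega
          have hu'_ex : ((starSet G a A).filter (fun z => G.Adj v2 z)).Nonempty := by
            rw [← Finset.card_pos]
            unfold nbrIn at hstar21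
            omega
          obtain ⟨u', hu''⟩ := hu'_ex
          obtain ⟨hu'S, hv2u'⟩ := Finset.mem_filter.mp hu''
          have hcases : nbrIn G A v2 = a v2 ∨ nbrIn G A v2 = a v2 + 1 := by omega
          rcases hcases with h | h
          · by_cases huu : u = u'
            · exact Or.inl ⟨v1, v2, u, Ne.symm hv21, hv1A, hdv1, hv2A, h, huS, hv1u, huu ▸ hv2u'⟩
            · exact Or.inr (Or.inl
                ⟨v1, v2, u, u', Ne.symm hv21, huu, hv1A, hdv1, hv2A, h, huS, hu'S, hv1u, hv2u'⟩)
          · by_cases huu : u = u'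
            · exact Or.inr (Or.inr (Or.inr (Or.inl
                ⟨v1, v2, u, hv1A, hdv1, hv2A, h, huS, h21.symm, hv1u, huu ▸ hv2u'⟩)))
            · exact Or.inr (Or.inr (Or.inr (Or.inr
                ⟨v1, v2, u, u', huu, hv1A, hdv1, hv2A, h, huS, hu'S, h21.symm, hv1u, hv2u'⟩)))
      · rw [if_neg h21] at hrel2
        have hstar21 : nbrIn G (starSet G a A) v2 = 1 := by omega
        have hdv2 : nbrIn G A v2 = a v2 := by omega
        have hu'_ex : ((starSet G a A).filter (fun z => G.Adj v2 z)).Nonempty := by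
          rw [← Finset.card_pos]
          unfold nbrIn at hstar21
          omega
        obtain ⟨u', hu''⟩ := hu'_ex
        obtain ⟨hu'S, hv2u'⟩ := Finset.mem_filter.mp hu''
        by_cases huu : u = u'
        · exact Or.inl ⟨v1, v2, u, Ne.symm hv21, hv1A, hdv1, hv2A, hdv2, huS, hv1u, huu ▸ hv2u'⟩
        · exact Or.inr (Or.inl
            ⟨v1, v2, u, u', Ne.symm hv21, huu, hv1A, hdv1, hv2A, hdv2, huS, hu'S, hv1u, hv2u'⟩)
  · -- case A = A*: contradiction
    exfalso
    push_neg at hX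
    obtain ⟨y, hy⟩ := hBstar_ne
    obtain ⟨hyB, hyd⟩ := mem_starSet.mp hy
    have hyA : y ∉ A := fun h => Finset.disjoint_left.mp hdisj h hyB
    have hallstar : ∀ v ∈ A, v ∈ starSet G a A := fun v hv => mem_starSet.mpr ⟨hv, hX v hv⟩
    have hyadj : ∀ v ∈ A, G.Adj v y := fun v hv => hadj v (hallstar v hv) y hy
    have hdA1 : ∀ v ∈ A, nbrIn G A v ≤ 1 := by
      intro v hv
      by_contra h
      have h1 : 1 < (A.filter (fun z => G.Adj v z)).card := by
        unfold nbrIn at h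
        omega
      obtain ⟨p, hp, q, hq, hpq⟩ := Finset.one_lt_card.mp h1
      obtain ⟨hpA, hvp⟩ := Finset.mem_filter.mp hp
      obtain ⟨hqA, hvq⟩ := Finset.mem_filter.mp hq
      have heq : v = y := common_nbr_unique hC4 hvp.symm hvq.symm (hyadj p hpA) (hyadj q hqA) hpq
      exact hyA (heq ▸ hv)
    have hsplity := nbrIn_split G hdisj huniv y
    have hdegy := hdeg y
    by_cases hall : ∀ v ∈ A, nbrIn G A v = 1 ∧ a v = 2
    · -- every vertex of A is matched, a ≡ 2
      have hSgood : IsGood G a (insert y A) := by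
        intro z hz
        rcases Finset.mem_insert.mp hz with rfl | hzA
        · rw [nbrIn_insert_self]
          omega
        · rw [nbrIn_insert G hyA z, if_pos (hyadj z hzA)]
          have := hall z hzA
          omega
      have hHne : (B.erase y).Nonempty := by
        rw [← Finset.card_pos, Finset.card_erase_of_mem hyB]; omega
      have hdisj2 : Disjoint (insert y A) (B.erase y) := by
        rw [Finset.disjoint_left]
        intro z hz1 hz2
        obtain ⟨hzy, hzB⟩ := Finset.mem_erase.mp hz2
        rcases Finset.mem_insert.mp hz1 with rfl | hzA
        · exact hzy rfl
        · exact Finset.disjoint_left.mp hdisj hzA hzB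
      have huniv2 : insert y A ∪ B.erase y = Finset.univ := by
        rw [Finset.insert_union, ← Finset.union_insert, Finset.insert_erase hyB, huniv]
      have hHgood : IsGood G b (B.erase y) := by
        intro w hw
        obtain ⟨hwy, hwB⟩ := Finset.mem_erase.mp hw
        have hwA : w ∉ A := fun h => Finset.disjoint_left.mp hdisj h hwB
        have hcapw : nbrIn G (insert y A) w ≤ 1 := by
          by_contra h
          have h1 : 1 < ((insert y A).filter (fun z => G.Adj w z)).card := by
            unfold nbrIn at h
            omega
          obtain ⟨p, hp, q, hq, hpq⟩ := Finset.one_lt_card.mp h1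
          obtain ⟨hpm, hwp⟩ := Finset.mem_filter.mp hp
          obtain ⟨hqm, hwq⟩ := Finset.mem_filter.mp hq
          rcases Finset.mem_insert.mp hpm with rfl | hpA
          · rcases Finset.mem_insert.mp hqm with h' | hqA
            · exact hpq h'.symm
            · obtain ⟨hq1, hq2⟩ := hall q hqA
              have hpart_ex : (A.filter (fun z => G.Adj q z)).Nonempty := by
                rw [← Finset.card_pos]
                unfold nbrIn at hq1
                omega
              obtain ⟨q', hq'⟩ := hpart_ex
              obtain ⟨hq'A, hqq'⟩ := Finset.mem_filter.mp hq'
              have hqy : q ≠ p := fun h' => hyA (h' ▸ hqA)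
              have heq : w = q' := common_nbr_unique hC4 hwq.symm hwp.symm hqq'
                (hyadj q' hq'A).symm hqy
              exact hwA (heq ▸ hq'A)
          · rcases Finset.mem_insert.mp hqm with rfl | hqA
            · obtain ⟨hp1, hp2⟩ := hall p hpA
              have hpart_ex : (A.filter (fun z => G.Adj p z)).Nonempty := by
                rw [← Finset.card_pos]
                unfold nbrIn at hp1
                omega
              obtain ⟨p', hp'⟩ := hpart_ex
              obtain ⟨hp'A, hpp'⟩ := Finset.mem_filter.mp hp'
              have hpy : p ≠ q := fun h' => hyA (h' ▸ hpA)
              have heq : w = p' := common_nbr_unique hC4 hwp.symm hwq.symm hpp'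
                (hyadj p' hp'A).symm hpy
              exact hwA (heq ▸ hp'A)
            · have heq : w = y := common_nbr_unique hC4 hwp.symm hwq.symm (hyadj p hpA)
                (hyadj q hqA) hpq
              exact hwy heq
        have hsplitw := nbrIn_split G hdisj2 huniv2 w
        have hdegw := hdeg w
        have := ha w
        omega
      exact hnf ⟨insert y A, B.erase y, hdisj2, ⟨y, Finset.mem_insert_self y A⟩, hHne,
        hSgood, hHgood⟩
    · -- some v0 with d_A(v0) ≤ a(v0) - 2
      push_neg at hall
      obtain ⟨v0, hv0A, hv0⟩ := hall
      have hdA1v0 := hdA1 v0 hv0A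
      have hXv0 := hX v0 hv0A
      have hav0 := ha v0
      have hdv0 : nbrIn G A v0 + 2 ≤ a v0 := by
        rcases Nat.lt_or_ge (nbrIn G A v0) 1 with h | h
        · omega
        · have h1 : nbrIn G A v0 = 1 := by omega
          have h2 : a v0 ≠ 2 := fun hc => (hv0 h1) hc
          omega
      have hv0y : G.Adj v0 y := hyadj v0 hv0A
      have hv0B : v0 ∉ B := Finset.disjoint_left.mp hdisj hv0A
      have hyv0 : y ≠ v0 := fun h => hyA (h ▸ hv0A)
      have I1 := moveIdent G a b hv0A hv0B
      have I2 := moveIdent G b a (Finset.mem_insert_of_mem hyB : y ∈ insert v0 B)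
        (fun h => hyA (Finset.mem_of_mem_erase h) : y ∉ A.erase v0)
      rw [Finset.erase_insert_of_ne hv0y.ne] at I2
      rw [weight_comm G b a (insert v0 (B.erase y)) (insert y (A.erase v0)),
        weight_comm G b a (insert v0 B) (A.erase v0)] at I2
      have e1 : nbrIn G (A.erase v0) v0 = nbrIn G A v0 := nbrIn_erase_self G A v0
      have e2 : nbrIn G (insert v0 (B.erase y)) y = nbrIn G (B.erase y) y + 1 := by
        rw [nbrIn_insert G (fun h => hv0B (Finset.mem_of_mem_erase h)) y, if_pos hv0y.symm]
      have e3 : nbrIn G (B.erase y) y = nbrIn G B y := nbrIn_erase_self G B y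
      have e4 : nbrIn G A y = nbrIn G (A.erase v0) y + 1 := by
        have h := nbrIn_erase_mem G hv0A y
        rwa [if_pos hv0y.symm] at h
      have hsplitv0 := nbrIn_split G hdisj huniv v0
      have hdegv0 := hdeg v0
      have hby := hb y
      have hlt : weight G a b A B
          < weight G a b (insert y (A.erase v0)) (insert v0 (B.erase y)) := by
        omega
      have hpart2 : IsPartition (insert y (A.erase v0)) (insert v0 (B.erase y)) := by
        refine ⟨?_, ⟨y, Finset.mem_insert_self _ _⟩, ⟨v0, Finset.mem_insert_self _ _⟩, ?_⟩
        · rw [Finset.disjoint_left]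
          intro z hz1 hz2
          rcases Finset.mem_insert.mp hz1 with rfl | hz1'
          · rcases Finset.mem_insert.mp hz2 with h | h
            · exact hyv0 h
            · exact (Finset.mem_erase.mp h).1 rfl
          · obtain ⟨hzv0, hzA⟩ := Finset.mem_erase.mp hz1'
            rcases Finset.mem_insert.mp hz2 with rfl | h
            · exact hzv0 rfl
            · exact Finset.disjoint_left.mp hdisj hzA (Finset.mem_of_mem_erase h)
        · apply Finset.eq_univ_iff_forall.mpr
          intro z
          have hz : z ∈ A ∪ B := by rw [huniv]; exact Finset.mem_univ z
          rw [Finset.mem_union] at hz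
          rw [Finset.mem_union, Finset.mem_insert, Finset.mem_insert, Finset.mem_erase,
            Finset.mem_erase]
          by_cases hzy : z = y
          · exact Or.inl (Or.inl hzy)
          · by_cases hzv : z = v0
            · exact Or.inr (Or.inl hzv)
            · rcases hz with h | h
              · exact Or.inl (Or.inr ⟨hzv, h⟩)
              · exact Or.inr (Or.inr ⟨hzy, h⟩)
      have hnotAB2 : ¬ ABPartition G a b (insert y (A.erase v0)) (insert v0 (B.erase y)) :=
        fun h => absurd (hmax _ _ h) (by omega)
      have hdegA2 : ¬ IsDegenerate G (fun x => (a x : ℤ) - 1) (insert y (A.erase v0)) := by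
        intro hdA2
        have hdB2 : ¬ IsDegenerate G (fun x => (b x : ℤ) - 1) (insert v0 (B.erase y)) :=
          fun hdB2 => hnotAB2 ⟨hpart2, hdA2, hdB2⟩
        obtain ⟨H, hHsub, hHne, hHgood⟩ := exists_good_of_not_degenerate hdB2
        obtain ⟨S, hSsub, hSne, hSgood⟩ := SB y hy
        apply hnf
        refine ⟨S, H, ?_, hSne, hHne, hSgood, hHgood⟩
        rw [Finset.disjoint_left]
        intro z hzS hzH
        rcases Finset.mem_insert.mp (hSsub hzS) with rfl | hzA
        · rcases Finset.mem_insert.mp (hHsub hzH) with h | h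
          · exact hyv0 h
          · exact (Finset.mem_erase.mp h).1 rfl
        · rcases Finset.mem_insert.mp (hHsub hzH) with rfl | h
          · have h1 := hSgood z hzS
            have h2 : nbrIn G S z ≤ nbrIn G (insert y A) z := nbrIn_mono G hSsub z
            have h3 : nbrIn G (insert y A) z = nbrIn G A z + if G.Adj z y then 1 else 0 :=
              nbrIn_insert G hyA z
            rw [if_pos hv0y] at h3
            omega
          · exact Finset.disjoint_left.mp hdisj hzA (Finset.mem_of_mem_erase h)
      obtain ⟨S', hS'sub, hS'ne, hS'good⟩ := exists_good_of_not_degenerate hdegA2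
      obtain ⟨H0, hH0sub, hH0ne, hH0good⟩ := SA v0 (hallstar v0 hv0A)
      have hyH0 : y ∈ H0 := by
        by_contra hyH
        apply hnf
        refine ⟨S', H0, ?_, hS'ne, hH0ne, hS'good, hH0good⟩
        rw [Finset.disjoint_left]
        intro z hz1 hz2
        rcases Finset.mem_insert.mp (hS'sub hz1) with rfl | hz1'
        · exact hyH hz2
        · obtain ⟨hzv0, hzA⟩ := Finset.mem_erase.mp hz1'
          rcases Finset.mem_insert.mp (hH0sub hz2) with rfl | h
          · exact hzv0 rfl
          · exact Finset.disjoint_left.mp hdisj hzA h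
      have hdBy' : nbrIn G B y + 1 = b y := by
        have h1 := hH0good y hyH0
        have h2 : nbrIn G H0 y ≤ nbrIn G (insert v0 B) y := nbrIn_mono G hH0sub y
        have h3 : nbrIn G (insert v0 B) y = nbrIn G B y + if G.Adj y v0 then 1 else 0 :=
          nbrIn_insert G hv0B y
        rw [if_pos hv0y.symm] at h3
        omega
      have hyS' : y ∈ S' := by
        by_contra hyS
        have hS'A : S' ⊆ A := by
          intro z hz
          rcases Finset.mem_insert.mp (hS'sub hz) with rfl | h
          · exact absurd hz hyS
          · exact Finset.mem_of_mem_erase h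
        obtain ⟨z, hz, hzd⟩ := hdegA S' hS'A hS'ne
        have hzd' : (nbrIn G S' z : ℤ) ≤ (a z : ℤ) - 1 := hzd
        have := hS'good z hz
        omega
      have hfin1 : nbrIn G S' y ≤ (A.erase v0).card := by
        calc nbrIn G S' y ≤ nbrIn G (insert y (A.erase v0)) y := nbrIn_mono G hS'sub y
        _ = nbrIn G (A.erase v0) y := nbrIn_insert_self G _ y
        _ ≤ ((A.erase v0).erase y).card := nbrIn_le_card_erase G _ y
        _ ≤ (A.erase v0).card := Finset.card_le_card (Finset.erase_subset _ _)
      have hcardA : nbrIn G A y = A.card := by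
        unfold nbrIn
        rw [Finset.filter_true_of_mem (fun v hv => (hyadj v hv).symm)]
      have hAcard1 : (A.erase v0).card = A.card - 1 := Finset.card_erase_of_mem hv0A
      have hfin2 := hS'good y hyS'
      omega


/-- Claim 9: for any `(A,B) ∈ 𝒫`, one of the five configurations (A1)-(A5) occurs in `A`,
and analogously one of (B1)-(B5) occurs in `B`. -/
theorem config_exists [Fintype V] (G : SimpleGraph V) (a b : V → ℕ)
    (hC4 : C4Free G) (ha : ∀ x : V, 2 ≤ a x) (hb : ∀ x : V, 2 ≤ b x)
    (hdeg : ∀ x : V, G.degree x + 1 = a x + b x)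
    (hnf : ¬ ∃ A B : Finset V, FeasiblePair G a b A B)
    (A B : Finset V) (hAB : MaxAB G a b A B) :
    HasConfig G a A (starSet G a A) ∧ HasConfig G b B (starSet G b B) := by
  refine ⟨side_config G a b hC4 ha hb hdeg hnf A B hAB, ?_⟩
  have hnf' : ¬ ∃ P Q : Finset V, FeasiblePair G b a P Q := by
    rintro ⟨P, Q, h1, h2, h3, h4, h5⟩
    exact hnf ⟨Q, P, h1.symm, h3, h2, h5, h4⟩
  exact side_config G b a hC4 hb ha (fun x => by have := hdeg x; omega) hnf' B A
    (maxAB_comm hAB)
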